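/- arXiv:2305.19113 — 2 statements merged into one kernel-verified Lean document; each statement's English description precedes it below -/
import Mathlib

section
/- Let g₁ = [[a₁,f₁,b₁],[h₁,e₁,j₁],[c₁,k₁,d₁]] and g₂ = [[a₂,f₂,b₂],[h₂,e₂,j₂],[c₂,k₂,d₂]] be block matrices in GL_n(D) with a_i, d_i of size m×m and e_i of size r×r. Then the doubling map (g₁,g₂) ↦ R·diag(g₁,g₂)·R^{-1} is given explicitly by the 2n×2n block matrix [[ (e₁+e₂)/2, -j₂/2, εh₁/2, ε(e₁-e₂)θ/4, εh₂/2, εj₁/2],[-k₂, d₂, 0, εk₂θ/2, -εc₂, 0],[εf₁, 0, a₁, f₁θ/2, 0, b₁],[εθ^{-1}(e₁-e₂), εθ^{-1}j₂, θ^{-1}h₁, θ^{-1}((e₁+e₂)/2)θ, -θ^{-1}h₂, θ^{-1}j₁],[εf₂, -εb₂, 0, -f₂θ/2, a₂, 0],[εk₁, 0, c₁, k₁θ/2, 0, d₁]]. -/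
open Matrix

namespace Stmt2

variable {D : Type*} [Ring D] [StarRing D]

/-- Index type for the `(m,r,m)` block decomposition of size `n = 2m+r`. -/
abbrev Bidx (m r : ℕ) := Fin m ⊕ (Fin r ⊕ Fin m)

/-- Index type for the `(r,m,m)` block decomposition of size `n = 2m+r`. -/
abbrev Aidx (m r : ℕ) := Fin r ⊕ (Fin m ⊕ Fin m)

/-- Assemble a 3×3 block matrix with block sizes `(m, r, m)`. -/
def blk3 {m r : ℕ} (a : Matrix (Fin m) (Fin m) D) (f : Matrix (Fin m) (Fin r) D)
    (b : Matrix (Fin m) (Fin m) D) (h : Matrix (Fin r) (Fin m) D)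
    (e : Matrix (Fin r) (Fin r) D) (jj : Matrix (Fin r) (Fin m) D)
    (c : Matrix (Fin m) (Fin m) D) (k : Matrix (Fin m) (Fin r) D)
    (d : Matrix (Fin m) (Fin m) D) : Matrix (Bidx m r) (Bidx m r) D :=
  Matrix.of fun p q => match p, q with
    | Sum.inl i, Sum.inl j => a i j
    | Sum.inl i, Sum.inr (Sum.inl j) => f i j
    | Sum.inl i, Sum.inr (Sum.inr j) => b i j
    | Sum.inr (Sum.inl i), Sum.inl j => h i j
    | Sum.inr (Sum.inl i), Sum.inr (Sum.inl j) => e i j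
    | Sum.inr (Sum.inl i), Sum.inr (Sum.inr j) => jj i j
    | Sum.inr (Sum.inr i), Sum.inl j => c i j
    | Sum.inr (Sum.inr i), Sum.inr (Sum.inl j) => k i j
    | Sum.inr (Sum.inr i), Sum.inr (Sum.inr j) => d i j

/-- Assemble a 3×3 block matrix with row block sizes `(r, m, m)` and column block
sizes `(m, r, m)`. -/
def blk3AB {m r : ℕ} (x11 : Matrix (Fin r) (Fin m) D) (x12 : Matrix (Fin r) (Fin r) D)
    (x13 : Matrix (Fin r) (Fin m) D) (x21 : Matrix (Fin m) (Fin m) D)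
    (x22 : Matrix (Fin m) (Fin r) D) (x23 : Matrix (Fin m) (Fin m) D)
    (x31 : Matrix (Fin m) (Fin m) D) (x32 : Matrix (Fin m) (Fin r) D)
    (x33 : Matrix (Fin m) (Fin m) D) : Matrix (Aidx m r) (Bidx m r) D :=
  Matrix.of fun p q => match p, q with
    | Sum.inl i, Sum.inl j => x11 i j
    | Sum.inl i, Sum.inr (Sum.inl j) => x12 i j
    | Sum.inl i, Sum.inr (Sum.inr j) => x13 i j
    | Sum.inr (Sum.inl i), Sum.inl j => x21 i j
    | Sum.inr (Sum.inl i), Sum.inr (Sum.inl j) => x22 i j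
    | Sum.inr (Sum.inl i), Sum.inr (Sum.inr j) => x23 i j
    | Sum.inr (Sum.inr i), Sum.inl j => x31 i j
    | Sum.inr (Sum.inr i), Sum.inr (Sum.inl j) => x32 i j
    | Sum.inr (Sum.inr i), Sum.inr (Sum.inr j) => x33 i j

/-- The matrix `Φ = [[0,0,1_m],[0,θ,0],[ε·1_m,0,0]]`. -/
def PhiMat {m r : ℕ} (ε : D) (θ : Matrix (Fin r) (Fin r) D) : Matrix (Bidx m r) (Bidx m r) D :=
  blk3 0 0 1 0 θ 0 (ε • 1) 0 0

/-- The matrix `J_n = [[0,1_n],[ε·1_n,0]]` in the `(r,m,m)` basis. -/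
def Jmat (m r : ℕ) (ε : D) : Matrix (Aidx m r ⊕ Aidx m r) (Aidx m r ⊕ Aidx m r) D :=
  fromBlocks 0 1 (ε • 1) 0

/-- The explicit change-of-basis matrix `R` of the doubling method, with row blocks
of sizes `(r,m,m,r,m,m)` and column blocks of sizes `(m,r,m,m,r,m)`. -/
def Rmat {m r : ℕ} (ε : D) (θ : Matrix (Fin r) (Fin r) D) [Invertible (2 : D)]
    [Invertible θ] : Matrix (Aidx m r ⊕ Aidx m r) (Bidx m r ⊕ Bidx m r) D :=
  fromBlocks
    (blk3AB 0 ((⅟(2:D) * ε) • 1) 0 0 0 0 1 0 0)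
    (blk3AB 0 ((⅟(2:D) * ε) • 1) 0 0 0 (-(ε • 1)) 0 0 0)
    (blk3AB 0 (⅟θ) 0 0 0 0 0 0 1)
    (blk3AB 0 (-(⅟θ)) 0 1 0 0 0 0 0)

/-- Assemble a 3×3 block matrix with block sizes `(r, m, m)`. -/
def blk3A {m r : ℕ} (x11 : Matrix (Fin r) (Fin r) D) (x12 : Matrix (Fin r) (Fin m) D)
    (x13 : Matrix (Fin r) (Fin m) D) (x21 : Matrix (Fin m) (Fin r) D)
    (x22 : Matrix (Fin m) (Fin m) D) (x23 : Matrix (Fin m) (Fin m) D)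
    (x31 : Matrix (Fin m) (Fin r) D) (x32 : Matrix (Fin m) (Fin m) D)
    (x33 : Matrix (Fin m) (Fin m) D) : Matrix (Aidx m r) (Aidx m r) D :=
  Matrix.of fun p q => match p, q with
    | Sum.inl i, Sum.inl j => x11 i j
    | Sum.inl i, Sum.inr (Sum.inl j) => x12 i j
    | Sum.inl i, Sum.inr (Sum.inr j) => x13 i j
    | Sum.inr (Sum.inl i), Sum.inl j => x21 i j
    | Sum.inr (Sum.inl i), Sum.inr (Sum.inl j) => x22 i j
    | Sum.inr (Sum.inl i), Sum.inr (Sum.inr j) => x23 i j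
    | Sum.inr (Sum.inr i), Sum.inl j => x31 i j
    | Sum.inr (Sum.inr i), Sum.inr (Sum.inl j) => x32 i j
    | Sum.inr (Sum.inr i), Sum.inr (Sum.inr j) => x33 i j


section Aux

variable {m r : ℕ}

lemma blk3A_mul_blk3AB (x11 : Matrix (Fin r) (Fin r) D) (x12 : Matrix (Fin r) (Fin m) D)
    (x13 : Matrix (Fin r) (Fin m) D) (x21 : Matrix (Fin m) (Fin r) D)
    (x22 : Matrix (Fin m) (Fin m) D) (x23 : Matrix (Fin m) (Fin m) D)
    (x31 : Matrix (Fin m) (Fin r) D) (x32 : Matrix (Fin m) (Fin m) D)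
    (x33 : Matrix (Fin m) (Fin m) D)
    (y11 : Matrix (Fin r) (Fin m) D) (y12 : Matrix (Fin r) (Fin r) D)
    (y13 : Matrix (Fin r) (Fin m) D) (y21 : Matrix (Fin m) (Fin m) D)
    (y22 : Matrix (Fin m) (Fin r) D) (y23 : Matrix (Fin m) (Fin m) D)
    (y31 : Matrix (Fin m) (Fin m) D) (y32 : Matrix (Fin m) (Fin r) D)
    (y33 : Matrix (Fin m) (Fin m) D) :
    blk3A x11 x12 x13 x21 x22 x23 x31 x32 x33 * blk3AB y11 y12 y13 y21 y22 y23 y31 y32 y33 =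
      blk3AB (x11 * y11 + x12 * y21 + x13 * y31) (x11 * y12 + x12 * y22 + x13 * y32)
        (x11 * y13 + x12 * y23 + x13 * y33)
        (x21 * y11 + x22 * y21 + x23 * y31) (x21 * y12 + x22 * y22 + x23 * y32)
        (x21 * y13 + x22 * y23 + x23 * y33)
        (x31 * y11 + x32 * y21 + x33 * y31) (x31 * y12 + x32 * y22 + x33 * y32)
        (x31 * y13 + x32 * y23 + x33 * y33) := by
  ext p q
  rcases p with i | i | i <;> rcases q with j | j | j <;>
    simp [blk3A, blk3AB, Matrix.mul_apply, Matrix.add_apply, Fintype.sum_sum_type, add_assoc]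

lemma blk3AB_mul_blk3 (x11 : Matrix (Fin r) (Fin m) D) (x12 : Matrix (Fin r) (Fin r) D)
    (x13 : Matrix (Fin r) (Fin m) D) (x21 : Matrix (Fin m) (Fin m) D)
    (x22 : Matrix (Fin m) (Fin r) D) (x23 : Matrix (Fin m) (Fin m) D)
    (x31 : Matrix (Fin m) (Fin m) D) (x32 : Matrix (Fin m) (Fin r) D)
    (x33 : Matrix (Fin m) (Fin m) D)
    (a : Matrix (Fin m) (Fin m) D) (f : Matrix (Fin m) (Fin r) D)
    (b : Matrix (Fin m) (Fin m) D) (h : Matrix (Fin r) (Fin m) D)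
    (e : Matrix (Fin r) (Fin r) D) (jj : Matrix (Fin r) (Fin m) D)
    (c : Matrix (Fin m) (Fin m) D) (k : Matrix (Fin m) (Fin r) D)
    (d : Matrix (Fin m) (Fin m) D) :
    blk3AB x11 x12 x13 x21 x22 x23 x31 x32 x33 * blk3 a f b h e jj c k d =
      blk3AB (x11 * a + x12 * h + x13 * c) (x11 * f + x12 * e + x13 * k)
        (x11 * b + x12 * jj + x13 * d)
        (x21 * a + x22 * h + x23 * c) (x21 * f + x22 * e + x23 * k)
        (x21 * b + x22 * jj + x23 * d)
        (x31 * a + x32 * h + x33 * c) (x31 * f + x32 * e + x33 * k)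
        (x31 * b + x32 * jj + x33 * d) := by
  ext p q
  rcases p with i | i | i <;> rcases q with j | j | j <;>
    simp [blk3, blk3AB, Matrix.mul_apply, Matrix.add_apply, Fintype.sum_sum_type, add_assoc]

lemma blk3AB_add (x11 : Matrix (Fin r) (Fin m) D) (x12 : Matrix (Fin r) (Fin r) D)
    (x13 : Matrix (Fin r) (Fin m) D) (x21 : Matrix (Fin m) (Fin m) D)
    (x22 : Matrix (Fin m) (Fin r) D) (x23 : Matrix (Fin m) (Fin m) D)
    (x31 : Matrix (Fin m) (Fin m) D) (x32 : Matrix (Fin m) (Fin r) D)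
    (x33 : Matrix (Fin m) (Fin m) D)
    (y11 : Matrix (Fin r) (Fin m) D) (y12 : Matrix (Fin r) (Fin r) D)
    (y13 : Matrix (Fin r) (Fin m) D) (y21 : Matrix (Fin m) (Fin m) D)
    (y22 : Matrix (Fin m) (Fin r) D) (y23 : Matrix (Fin m) (Fin m) D)
    (y31 : Matrix (Fin m) (Fin m) D) (y32 : Matrix (Fin m) (Fin r) D)
    (y33 : Matrix (Fin m) (Fin m) D) :
    blk3AB x11 x12 x13 x21 x22 x23 x31 x32 x33 + blk3AB y11 y12 y13 y21 y22 y23 y31 y32 y33 =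
      blk3AB (x11 + y11) (x12 + y12) (x13 + y13) (x21 + y21) (x22 + y22) (x23 + y23)
        (x31 + y31) (x32 + y32) (x33 + y33) := by
  ext p q
  rcases p with i | i | i <;> rcases q with j | j | j <;> simp [blk3AB, Matrix.add_apply]

lemma blk3AB_congr {x11 y11 : Matrix (Fin r) (Fin m) D} {x12 y12 : Matrix (Fin r) (Fin r) D}
    {x13 y13 : Matrix (Fin r) (Fin m) D} {x21 y21 : Matrix (Fin m) (Fin m) D}
    {x22 y22 : Matrix (Fin m) (Fin r) D} {x23 y23 : Matrix (Fin m) (Fin m) D}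
    {x31 y31 : Matrix (Fin m) (Fin m) D} {x32 y32 : Matrix (Fin m) (Fin r) D}
    {x33 y33 : Matrix (Fin m) (Fin m) D}
    (h11 : x11 = y11) (h12 : x12 = y12) (h13 : x13 = y13) (h21 : x21 = y21)
    (h22 : x22 = y22) (h23 : x23 = y23) (h31 : x31 = y31) (h32 : x32 = y32)
    (h33 : x33 = y33) :
    blk3AB x11 x12 x13 x21 x22 x23 x31 x32 x33 = blk3AB y11 y12 y13 y21 y22 y23 y31 y32 y33 := by
  rw [h11, h12, h13, h21, h22, h23, h31, h32, h33]

lemma mul_smul_central {s : D} (hs : ∀ x : D, x * s = s * x) {p q t : Type*} [Fintype q]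
    (M : Matrix p q D) (N : Matrix q t D) : M * (s • N) = s • (M * N) := by
  ext i j
  simp only [Matrix.mul_apply, Matrix.smul_apply, smul_eq_mul, Finset.mul_sum]
  exact Finset.sum_congr rfl fun k _ => by rw [← mul_assoc, hs, mul_assoc]

end Aux

/-- explicit block formula for the doubling map
`(g₁,g₂) ↦ R · diag(g₁,g₂) · R⁻¹`. -/
theorem doubling_map_explicit {m r : ℕ} (ε : D) (hε : ε = 1 ∨ ε = -1)
    [Invertible (2 : D)] (θ : Matrix (Fin r) (Fin r) D) [Invertible θ]
    (hθ : θᴴ = ε • θ)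
    (Rinv : Matrix (Bidx m r ⊕ Bidx m r) (Aidx m r ⊕ Aidx m r) D)
    (hR₁ : Rmat (m := m) ε θ * Rinv = 1) (hR₂ : Rinv * Rmat (m := m) ε θ = 1)
    (a₁ b₁ c₁ d₁ a₂ b₂ c₂ d₂ : Matrix (Fin m) (Fin m) D)
    (f₁ k₁ f₂ k₂ : Matrix (Fin m) (Fin r) D)
    (h₁ j₁ h₂ j₂ : Matrix (Fin r) (Fin m) D)
    (e₁ e₂ : Matrix (Fin r) (Fin r) D)
    (hg₁ : IsUnit (blk3 a₁ f₁ b₁ h₁ e₁ j₁ c₁ k₁ d₁))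
    (hg₂ : IsUnit (blk3 a₂ f₂ b₂ h₂ e₂ j₂ c₂ k₂ d₂))
    (hG₁ : blk3 a₁ f₁ b₁ h₁ e₁ j₁ c₁ k₁ d₁ * PhiMat ε θ *
        (blk3 a₁ f₁ b₁ h₁ e₁ j₁ c₁ k₁ d₁)ᴴ = PhiMat ε θ)
    (hG₂ : blk3 a₂ f₂ b₂ h₂ e₂ j₂ c₂ k₂ d₂ * PhiMat ε θ *
        (blk3 a₂ f₂ b₂ h₂ e₂ j₂ c₂ k₂ d₂)ᴴ = PhiMat ε θ) :
    Rmat (m := m) ε θ *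
        fromBlocks (blk3 a₁ f₁ b₁ h₁ e₁ j₁ c₁ k₁ d₁) 0 0 (blk3 a₂ f₂ b₂ h₂ e₂ j₂ c₂ k₂ d₂) *
        Rinv =
      fromBlocks
        (blk3A (⅟(2:D) • (e₁ + e₂)) (-(⅟(2:D) • j₂)) (⅟(2:D) • (ε • h₁))
          (-k₂) d₂ 0
          (ε • f₁) 0 a₁)
        (blk3A ((⅟(2:D) * ⅟(2:D) * ε) • ((e₁ - e₂) * θ)) (⅟(2:D) • (ε • h₂)) (⅟(2:D) • (ε • j₁))
          (⅟(2:D) • (ε • (k₂ * θ))) (-(ε • c₂)) 0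
          (⅟(2:D) • (f₁ * θ)) 0 b₁)
        (blk3A (ε • (⅟θ * (e₁ - e₂))) (ε • (⅟θ * j₂)) (⅟θ * h₁)
          (ε • f₂) (-(ε • b₂)) 0
          (ε • k₁) 0 c₁)
        (blk3A (⅟(2:D) • (⅟θ * (e₁ + e₂) * θ)) (-(⅟θ * h₂)) (⅟θ * j₁)
          (-(⅟(2:D) • (f₂ * θ))) a₂ 0
          (⅟(2:D) • (k₁ * θ)) 0 d₁) := by
  have hc2' : ∀ x : D, Commute x (⅟(2:D)) := fun x => (Commute.ofNat_right x 2).invOf_right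
  have hcε' : ∀ x : D, Commute x ε := by
    rcases hε with rfl | rfl
    · exact fun x => Commute.one_right x
    · exact fun x => (Commute.one_right x).neg_right
  have hc2 : ∀ x : D, x * ⅟(2:D) = ⅟(2:D) * x := fun x => (hc2' x).eq
  have hcε : ∀ x : D, x * ε = ε * x := fun x => (hcε' x).eq
  have hεε : ε * ε = 1 := by rcases hε with rfl | rfl <;> simp
  have hc2ε : ∀ x : D, x * (⅟(2:D) * ε) = (⅟(2:D) * ε) * x :=
    fun x => ((hc2' x).mul_right (hcε' x)).eq
  have htwo : ∀ {p q : Type} (M : Matrix p q D), ⅟(2:D) • M + ⅟(2:D) • M = M := by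
    intro p q M
    rw [← add_smul, invOf_two_add_invOf_two, one_smul]
  have hhalf : ∀ {p q : Type} (s : D) (M : Matrix p q D),
      (⅟(2:D) * s) • M + (⅟(2:D) * s) • M = s • M := by
    intro p q s M
    rw [← add_smul, ← add_mul, invOf_two_add_invOf_two, one_mul]
  have l1 : ∀ {p q : Type} (a b : Matrix p q D), a + b + (a - b) = a + a := fun a b => by abel
  have l2 : ∀ {p q : Type} (a b : Matrix p q D), a + b + -(a - b) = b + b := fun a b => by abel
  have l3 : ∀ {p q : Type} (a b : Matrix p q D), a - b + (a + b) = a + a := fun a b => by abel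
  have l4 : ∀ {p q : Type} (a b : Matrix p q D), a - b + -(a + b) = -(b + b) := fun a b => by
    abel
  have cancel : ∀ (Y : Matrix (Aidx m r ⊕ Aidx m r) (Aidx m r ⊕ Aidx m r) D)
      (G : Matrix (Bidx m r ⊕ Bidx m r) (Bidx m r ⊕ Bidx m r) D),
      Y * Rmat (m := m) ε θ = Rmat (m := m) ε θ * G →
      Rmat (m := m) ε θ * G * Rinv = Y := by
    intro Y G h
    rw [← h, Matrix.mul_assoc, hR₁, Matrix.mul_one]
  refine cancel _ _ ?_
  rw [Rmat, fromBlocks_multiply, fromBlocks_multiply]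
  simp only [Matrix.mul_zero, Matrix.zero_mul, add_zero, zero_add,
    blk3A_mul_blk3AB, blk3AB_mul_blk3, blk3AB_add]
  rw [Matrix.fromBlocks_inj]
  refine ⟨blk3AB_congr ?_ ?_ ?_ ?_ ?_ ?_ ?_ ?_ ?_, blk3AB_congr ?_ ?_ ?_ ?_ ?_ ?_ ?_ ?_ ?_,
    blk3AB_congr ?_ ?_ ?_ ?_ ?_ ?_ ?_ ?_ ?_, blk3AB_congr ?_ ?_ ?_ ?_ ?_ ?_ ?_ ?_ ?_⟩ <;>
    simp only [Matrix.mul_one, Matrix.mul_zero, Matrix.zero_mul, Matrix.one_mul, Matrix.mul_neg,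
      Matrix.neg_mul, neg_neg, Matrix.smul_mul, mul_smul_central hcε, mul_smul_central hc2ε,
      Matrix.mul_assoc, mul_invOf_self, invOf_mul_self, smul_smul, mul_assoc, hεε, mul_one,
      one_mul, smul_neg, neg_smul, one_smul, smul_add, smul_sub, neg_zero, add_zero, zero_add,
      hc2, Matrix.mul_add, Matrix.mul_sub] <;>
    first
      | rfl
      | exact neg_add_cancel _
      | exact add_neg_cancel _
      | exact htwo _
      | rw [← neg_add, hhalf]
      | rw [l1, hhalf]
      | rw [l2, hhalf]
      | rw [l3, htwo]
      | rw [l4, htwo]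

end Stmt2
end

section
/- Let q_z arise from z = x + i·y·y* with y ∈ GL_n(ℝ)-type data, and for s₁, s₂ ∈ ℂ define the confluent hypergeometric Gamma factor in the symplectic case: Γ-factor(s₁,s₂;n,t,t₊,t₋) = Π_{i=0}^{n-t-1} Γ(s₁+s₂-(n+1+i)/2) / (Π_{i=0}^{n-t₋-1} Γ(s₁-i/2) · Π_{i=0}^{n-t₊-1} Γ(s₂-i/2)), where t = t₊+t₋ ≤ n. Then for integer l ≥ n+1, at the special point (s₁,s₂) = (l,0) this Gamma factor, interpreted as the value of the meromorphic function ξ which equals the Γ-factor times an entire function, is zero unless t₋ = 0 and t = n (i.e., the associated symmetric matrix β is positive definite). -/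
namespace Stmt12

open Finset Complex

/-- vanishing of the confluent hypergeometric Gamma factor in the
symplectic case at the special point `(s₁, s₂) = (l, 0)`.

Here `Complex.Gamma` is Mathlib's Gamma function, which takes the value `0` at the
poles (the non-positive integers), so that reciprocals of Gamma factors are the
entire functions `1/Γ`; the displayed quantity is the value of the meromorphic
function `ξ`'s Gamma factor at `(l,0)`.  It is nonzero only if `tm = 0` and
`t = n`, i.e. only if the associated symmetric matrix `β` is positive definite. -/
theorem gamma_factor_vanishing (n tp tm l : ℕ)
    (ht : tp + tm ≤ n) (hl : n + 1 ≤ l) :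
    (∏ i ∈ range (n - (tp + tm)),
        Complex.Gamma ((l : ℂ) - ((n : ℂ) + 1 + (i : ℂ)) / 2)) *
      (∏ i ∈ range (n - tm), Complex.Gamma ((l : ℂ) - (i : ℂ) / 2))⁻¹ *
      (∏ i ∈ range (n - tp), (Complex.Gamma (0 - (i : ℂ) / 2))⁻¹) ≠ 0 →
    tm = 0 ∧ tp + tm = n := by
  intro h
  have hntp : n - tp = 0 := by
    by_contra hne
    apply h
    have h0 : (0 : ℕ) ∈ range (n - tp) := mem_range.mpr (Nat.pos_of_ne_zero hne)
    rw [Finset.prod_eq_zero h0 (by norm_num [Complex.Gamma_zero])]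
    ring
  omega

end Stmt12
end
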